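/- There exists a constant C > 0 such that for all real numbers a > b ≥ 0 and all ε ∈ (0,1): P(D₂ ≤ ε^a and D₁ ≤ ε^b) ≤ C · ε^{2a+b}. -/

import Mathlib

open MeasureTheory ProbabilityTheory Real Filter

/-- Density of the Beta distribution `β(u,v)` with respect to Lebesgue measure. -/
noncomputable def betaPDFReal (u v x : ℝ) : ℝ :=
  if 0 < x ∧ x < 1 then
    Real.Gamma (u + v) / (Real.Gamma u * Real.Gamma v) * x ^ (u - 1) * (1 - x) ^ (v - 1)
  else 0

/-- The Beta distribution `β(u,v)` on `ℝ`. -/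
noncomputable def betaMeasure (u v : ℝ) : Measure ℝ :=
  volume.withDensity fun x => ENNReal.ofReal (_root_.betaPDFReal u v x)

/-- Density of the generalized Gamma distribution `GG(u,v)` w.r.t. Lebesgue measure. -/
noncomputable def genGammaPDFReal (u v x : ℝ) : ℝ :=
  if 0 < x then v / Real.Gamma (u / v) * x ^ (u - 1) * Real.exp (-(x ^ v)) else 0

/-- The generalized Gamma distribution `GG(u,v)` on `ℝ`. -/
noncomputable def genGammaMeasure (u v : ℝ) : Measure ℝ :=
  volume.withDensity fun x => ENNReal.ofReal (genGammaPDFReal u v x)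

/-!
Conditionally on `B₂ Z₃ = u`, the event `(1 - B₁) u ≤ α, B₁ u ≤ β` forces `1 - B₁ ≤ α / u`, where
the `β(1,2)` density `2 (1 - y)` is at most `2 α / u`; so it has probability at most `2 α² / u²`,
and it is empty unless `u ≤ α + β`. Integrating over `B₂ = s` against the `β(3,1)` density `3 s²`
cancels the singularity `s⁻²` and leaves `6 α² (α + β) / t³` at `Z₃ = t`, and the negative moment
`E[Z₃⁻³] = Γ(1) / Γ(5/2)` is finite. Taking `α = ε^a ≤ β = ε^b` gives `12 ε^(2a+b) / Γ(5/2)`.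
-/
open Set
open scoped ENNReal

lemma betaPDFReal_one_two (y : ℝ) :
    _root_.betaPDFReal 1 2 y = if 0 < y ∧ y < 1 then 2 * (1 - y) else 0 := by
  norm_num [_root_.betaPDFReal, show (1 : ℝ) + 2 = 3 by norm_num]

lemma betaPDFReal_three_one (s : ℝ) :
    _root_.betaPDFReal 3 1 s = if 0 < s ∧ s < 1 then 3 * s ^ 2 else 0 := by
  norm_num [_root_.betaPDFReal, show (3 : ℝ) + 1 = 4 by norm_num, Nat.factorial]

lemma measurable_betaPDFReal (u v : ℝ) : Measurable (_root_.betaPDFReal u v) :=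
  Measurable.ite measurableSet_Ioo (by fun_prop) measurable_const

lemma measurable_genGammaPDFReal (u v : ℝ) : Measurable (genGammaPDFReal u v) :=
  Measurable.ite measurableSet_Ioi (by fun_prop) measurable_const

lemma ae_pos_withDensity {f : ℝ → ℝ≥0∞} (hf : ∀ x ≤ 0, f x = 0) :
    ∀ᵐ x ∂volume.withDensity f, 0 < x := by
  simp only [ae_iff, not_lt]
  change volume.withDensity f (Iic 0) = 0
  rw [withDensity_apply _ measurableSet_Iic, setLIntegral_congr_fun measurableSet_Iic hf,
    lintegral_zero]

lemma ae_pos_betaMeasure (u v : ℝ) : ∀ᵐ x ∂_root_.betaMeasure u v, 0 < x :=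
  ae_pos_withDensity fun x hx => by simp [_root_.betaPDFReal, hx.not_gt]

lemma ae_pos_genGammaMeasure (u v : ℝ) : ∀ᵐ x ∂genGammaMeasure u v, 0 < x :=
  ae_pos_withDensity fun x hx => by simp [genGammaPDFReal, hx.not_gt]

lemma lintegral_rpow_genGammaMeasure {u v q : ℝ} (hu : 0 < u) (hv : 0 < v) (hq : -u < q) :
    ∫⁻ t, ENNReal.ofReal (t ^ q) ∂genGammaMeasure u v =
      ENNReal.ofReal (Gamma ((u + q) / v) / Gamma (u / v)) := by
  have hΓ : 0 < Gamma (u / v) := Gamma_pos_of_pos (div_pos hu hv)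
  have hdensity : ∀ t, ENNReal.ofReal (genGammaPDFReal u v t) * ENNReal.ofReal (t ^ q) =
      (Ioi 0).indicator (fun t => ENNReal.ofReal (v / Gamma (u / v)) *
        ENNReal.ofReal (t ^ (u + q - 1) * exp (-t ^ v))) t := by
    intro t
    by_cases ht : 0 < t
    · rw [indicator_of_mem (show t ∈ Ioi 0 from ht), genGammaPDFReal, if_pos ht,
        ← ENNReal.ofReal_mul (by positivity), ← ENNReal.ofReal_mul (by positivity),
        show u + q - 1 = u - 1 + q by ring, rpow_add ht]
      congr 1
      ring
    · simp [genGammaPDFReal, ht]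
  have hintegral :
      ∫ t in Ioi (0 : ℝ), t ^ (u + q - 1) * exp (-t ^ v) = 1 / v * Gamma ((u + q) / v) := by
    rw [integral_rpow_mul_exp_neg_rpow hv (by linarith), sub_add_cancel]
  rw [genGammaMeasure, lintegral_withDensity_eq_lintegral_mul _
      (measurable_genGammaPDFReal u v).ennreal_ofReal (by fun_prop)]
  simp only [Pi.mul_apply, hdensity]
  rw [lintegral_indicator measurableSet_Ioi, lintegral_const_mul _ (by fun_prop),
    ← ofReal_integral_eq_lintegral_ofReal
      (integrableOn_rpow_mul_exp_neg_rpow (by linarith) hv)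
      ((ae_restrict_mem measurableSet_Ioi).mono fun t ht =>
        mul_nonneg (rpow_nonneg (le_of_lt ht) _) (exp_pos _).le),
    hintegral, ← ENNReal.ofReal_mul (by positivity)]
  congr 1
  field_simp

lemma lintegral_le_mul_volume_Icc {f : ℝ → ℝ≥0∞} {x y : ℝ} {M : ℝ≥0∞}
    (hf : ∀ z, f z ≤ (Icc x y).indicator (fun _ => M) z) :
    ∫⁻ z, f z ≤ M * ENNReal.ofReal (y - x) := by
  calc ∫⁻ z, f z ≤ ∫⁻ z, (Icc x y).indicator (fun _ => M) z := lintegral_mono hf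
    _ = M * ENNReal.ofReal (y - x) := by
      rw [lintegral_indicator measurableSet_Icc, setLIntegral_const, Real.volume_Icc]

lemma lintegral_betaMeasure_three_one_indicator_le {t c : ℝ} (ht : 0 < t) :
    ∫⁻ s, (Iic c).indicator (fun x => ENNReal.ofReal (x ^ 2)⁻¹) (s * t) ∂_root_.betaMeasure 3 1 ≤
      ENNReal.ofReal (3 * c) * ENNReal.ofReal (t ^ (-3 : ℝ)) := by
  have hmeas : Measurable fun s => (Iic c).indicator (fun x => ENNReal.ofReal (x ^ 2)⁻¹) (s * t) :=
    (Measurable.indicator (by fun_prop) measurableSet_Iic).comp (by fun_prop)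
  rw [_root_.betaMeasure, lintegral_withDensity_eq_lintegral_mul _
    (_root_.measurable_betaPDFReal 3 1).ennreal_ofReal hmeas]
  have hbound : ∀ s, ENNReal.ofReal (_root_.betaPDFReal 3 1 s) *
      (Iic c).indicator (fun x => ENNReal.ofReal (x ^ 2)⁻¹) (s * t) ≤
      (Icc 0 (c / t)).indicator (fun _ => ENNReal.ofReal (3 / t ^ 2)) s := by
    intro s
    rw [betaPDFReal_three_one]
    split_ifs with hs
    · by_cases hst : s * t ≤ c
      · rw [indicator_of_mem (show s * t ∈ Iic c from hst),
          indicator_of_mem (show s ∈ Icc 0 (c / t) from ⟨hs.1.le, (le_div_iff₀ ht).2 hst⟩),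
          ← ENNReal.ofReal_mul (by positivity)]
        refine ENNReal.ofReal_le_ofReal (le_of_eq ?_)
        field_simp [hs.1.ne']
      · rw [indicator_of_notMem (show s * t ∉ Iic c from hst), mul_zero]
        exact zero_le
    · simp
  refine (lintegral_le_mul_volume_Icc hbound).trans_eq ?_
  rw [← ENNReal.ofReal_mul (by positivity), ← ENNReal.ofReal_mul' (by positivity),
    rpow_neg ht.le, rpow_ofNat, sub_zero]
  congr 1
  field_simp

lemma betaMeasure_one_two_setOf_le {u α β : ℝ} (hu : 0 < u) (hα : 0 ≤ α) :
    _root_.betaMeasure 1 2 {y | (1 - y) * u ≤ α ∧ y * u ≤ β} ≤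
      ENNReal.ofReal (2 * α ^ 2) *
        (Iic (α + β)).indicator (fun x => ENNReal.ofReal (x ^ 2)⁻¹) u := by
  set A := {y : ℝ | (1 - y) * u ≤ α ∧ y * u ≤ β}
  have hA : MeasurableSet A := by
    simp only [A, ofPred_and]
    exact (measurableSet_le (by fun_prop) measurable_const).inter
      (measurableSet_le (by fun_prop) measurable_const)
  rw [_root_.betaMeasure, withDensity_apply _ hA, ← lintegral_indicator hA]
  by_cases hsum : u ≤ α + β
  · set r := α / u
    have hbound : ∀ y, A.indicator (fun y => ENNReal.ofReal (_root_.betaPDFReal 1 2 y)) y ≤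
        (Icc (1 - r) 1).indicator (fun _ => ENNReal.ofReal (2 * r)) y := by
      intro y
      by_cases hy : y ∈ A
      · rw [indicator_of_mem hy, betaPDFReal_one_two]
        split_ifs with hy01
        · have hyr : 1 - y ≤ r := (le_div_iff₀ hu).2 hy.1
          rw [indicator_of_mem (show y ∈ Icc (1 - r) 1 from ⟨by linarith, hy01.2.le⟩)]
          exact ENNReal.ofReal_le_ofReal (by linarith)
        · simp
      · rw [indicator_of_notMem hy]
        exact zero_le
    refine (lintegral_le_mul_volume_Icc hbound).trans_eq ?_
    rw [indicator_of_mem (show u ∈ Iic (α + β) from hsum), ← ENNReal.ofReal_mul (by positivity),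
      ← ENNReal.ofReal_mul (by positivity)]
    congr 1
    simp only [r]
    field_simp
    ring
  · have hzero : ∀ y, A.indicator (fun y => ENNReal.ofReal (_root_.betaPDFReal 1 2 y)) y = 0 := by
      intro y
      by_cases hy : y ∈ A
      · rw [indicator_of_mem hy, betaPDFReal_one_two, if_neg, ENNReal.ofReal_zero]
        rintro -
        exact hsum (by linarith [hy.1, hy.2])
      · exact indicator_of_notMem hy _
    simp [hzero]

theorem ProbabilityTheory.iIndepFun.map_prodMk_prodMk_eq_prod {Ω β : Type*} [MeasurableSpace Ω]
    [MeasurableSpace β] {P : Measure Ω} [IsProbabilityMeasure P] {X Y Z : Ω → β}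
    (hX : Measurable X) (hY : Measurable Y) (hZ : Measurable Z) (h : iIndepFun ![X, Y, Z] P) :
    P.map (fun ω => ((Z ω, Y ω), X ω)) = ((P.map Z).prod (P.map Y)).prod (P.map X) := by
  have hmeas : ∀ i, Measurable (![X, Y, Z] i) := by
    intro i
    fin_cases i <;> assumption
  have hZY : IndepFun Z Y P := by simpa using h.indepFun (i := 2) (j := 1) (by decide)
  have hZYX : IndepFun (fun ω => (Z ω, Y ω)) X P := by
    simpa using h.indepFun_prodMk hmeas 2 1 0 (by decide) (by decide)
  rw [(indepFun_iff_map_prod_eq_prod_map_map (hZ.prodMk hY).aemeasurable hX.aemeasurable).mp hZYX,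
    (indepFun_iff_map_prod_eq_prod_map_map hZ.aemeasurable hY.aemeasurable).mp hZY]

theorem measure_degrees_eq_lintegral {Ω : Type*} [MeasurableSpace Ω] {P : Measure Ω}
    [IsProbabilityMeasure P] {B₁ B₂ Z₃ : Ω → ℝ} (hB₁ : Measurable B₁) (hB₂ : Measurable B₂)
    (hZ₃ : Measurable Z₃) (hindep : iIndepFun ![B₁, B₂, Z₃] P)
    (hlaw₁ : P.map B₁ = _root_.betaMeasure 1 2) (hlaw₂ : P.map B₂ = _root_.betaMeasure 3 1)
    (hlaw₃ : P.map Z₃ = genGammaMeasure 5 2) (α β : ℝ) :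
    P {ω | (1 - B₁ ω) * B₂ ω * Z₃ ω ≤ α ∧ B₁ ω * B₂ ω * Z₃ ω ≤ β} =
      ∫⁻ t, ∫⁻ s, _root_.betaMeasure 1 2 {y | (1 - y) * (s * t) ≤ α ∧ y * (s * t) ≤ β}
        ∂_root_.betaMeasure 3 1 ∂genGammaMeasure 5 2 := by
  set S : Set ((ℝ × ℝ) × ℝ) := {p | (1 - p.2) * (p.1.2 * p.1.1) ≤ α ∧ p.2 * (p.1.2 * p.1.1) ≤ β}
  have hS : MeasurableSet S := by
    simp only [S, ofPred_and]
    exact (measurableSet_le (by fun_prop) measurable_const).inter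
      (measurableSet_le (by fun_prop) measurable_const)
  have hevent : {ω | (1 - B₁ ω) * B₂ ω * Z₃ ω ≤ α ∧ B₁ ω * B₂ ω * Z₃ ω ≤ β} =
      (fun ω => ((Z₃ ω, B₂ ω), B₁ ω)) ⁻¹' S := by
    ext ω
    simp [S, mul_assoc]
  rw [hevent, ← Measure.map_apply (by fun_prop) hS,
    hindep.map_prodMk_prodMk_eq_prod hB₁ hB₂ hZ₃, Measure.prod_apply hS,
    lintegral_prod _ (measurable_measure_prodMk_left hS).aemeasurable, hlaw₁, hlaw₂, hlaw₃]
  rfl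

lemma lintegral_lintegral_betaMeasure_setOf_le {α β : ℝ} (hα : 0 ≤ α) :
    ∫⁻ t, ∫⁻ s, _root_.betaMeasure 1 2 {y | (1 - y) * (s * t) ≤ α ∧ y * (s * t) ≤ β}
        ∂_root_.betaMeasure 3 1 ∂genGammaMeasure 5 2 ≤
      ENNReal.ofReal (6 * α ^ 2 * (α + β) / Gamma (5 / 2)) := by
  set g : ℝ → ℝ≥0∞ := (Iic (α + β)).indicator fun x => ENNReal.ofReal (x ^ 2)⁻¹
  have hg : Measurable g := Measurable.indicator (by fun_prop) measurableSet_Iic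
  calc _ ≤ ∫⁻ t, ∫⁻ s, ENNReal.ofReal (2 * α ^ 2) * g (s * t) ∂_root_.betaMeasure 3 1
          ∂genGammaMeasure 5 2 := by
        refine lintegral_mono_ae ?_
        filter_upwards [ae_pos_genGammaMeasure 5 2] with t ht
        refine lintegral_mono_ae ?_
        filter_upwards [ae_pos_betaMeasure 3 1] with s hs
        exact betaMeasure_one_two_setOf_le (mul_pos hs ht) hα
    _ ≤ ∫⁻ t, ENNReal.ofReal (2 * α ^ 2) *
          (ENNReal.ofReal (3 * (α + β)) * ENNReal.ofReal (t ^ (-3 : ℝ))) ∂genGammaMeasure 5 2 := by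
        refine lintegral_mono_ae ?_
        filter_upwards [ae_pos_genGammaMeasure 5 2] with t ht
        have hgt : Measurable fun s => g (s * t) := hg.comp (by fun_prop)
        rw [lintegral_const_mul _ hgt]
        gcongr
        exact lintegral_betaMeasure_three_one_indicator_le ht
    _ = ENNReal.ofReal (6 * α ^ 2 * (α + β) / Gamma (5 / 2)) := by
        rw [lintegral_const_mul _ (by fun_prop), lintegral_const_mul _ (by fun_prop),
          lintegral_rpow_genGammaMeasure (by norm_num) (by norm_num) (by norm_num),
          show ((5 : ℝ) + -3) / 2 = 1 by norm_num, Gamma_one,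
          ← ENNReal.ofReal_mul' (by positivity), ← ENNReal.ofReal_mul (by positivity)]
        congr 1
        ring

/-- There is `C > 0` such that for all `a > b ≥ 0` and `ε ∈ (0,1)`,
`P(D₂ ≤ ε^a ∧ D₁ ≤ ε^b) ≤ C * ε^(2a+b)`, where `D₁ = B₁B₂Z₃` and `D₂ = (1-B₁)B₂Z₃`. -/
theorem eve_adam_joint_bound {Ω : Type*} [MeasurableSpace Ω] (P : Measure Ω) [IsProbabilityMeasure P]
    (B₁ B₂ Z₃ : Ω → ℝ) (hB₁ : Measurable B₁) (hB₂ : Measurable B₂) (hZ₃ : Measurable Z₃)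
    (hindep : iIndepFun ![B₁, B₂, Z₃] P)
    (hlaw₁ : P.map B₁ = _root_.betaMeasure 1 2)
    (hlaw₂ : P.map B₂ = _root_.betaMeasure 3 1)
    (hlaw₃ : P.map Z₃ = genGammaMeasure 5 2) :
    ∃ C : ℝ, 0 < C ∧ ∀ a b ε : ℝ, b < a → 0 ≤ b → 0 < ε → ε < 1 →
      P {ω | (1 - B₁ ω) * B₂ ω * Z₃ ω ≤ ε ^ a ∧ B₁ ω * B₂ ω * Z₃ ω ≤ ε ^ b}
        ≤ ENNReal.ofReal (C * ε ^ (2 * a + b)) := by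
  have hΓ : 0 < Gamma (5 / 2) := Gamma_pos_of_pos (by norm_num)
  refine ⟨12 / Gamma (5 / 2), by positivity, fun a b ε hba _ hε hε1 => ?_⟩
  have hεa : 0 < ε ^ a := rpow_pos_of_pos hε a
  have hab : ε ^ a ≤ ε ^ b := rpow_le_rpow_of_exponent_ge hε hε1.le hba.le
  have hpow : ε ^ (2 * a + b) = (ε ^ a) ^ 2 * ε ^ b := by
    rw [rpow_add hε, mul_comm 2 a, rpow_mul hε.le, rpow_two]
  rw [measure_degrees_eq_lintegral hB₁ hB₂ hZ₃ hindep hlaw₁ hlaw₂ hlaw₃]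
  refine (lintegral_lintegral_betaMeasure_setOf_le hεa.le).trans (ENNReal.ofReal_le_ofReal ?_)
  rw [hpow, div_mul_eq_mul_div, div_le_div_iff_of_pos_right hΓ]
  nlinarith [mul_le_mul_of_nonneg_left hab (sq_nonneg (ε ^ a))]
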